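/- There exists a universal constant C > 0 such that the following holds. Let K ≥ 1 be an integer, (X, 𝒜) and (Y, ℬ) measurable spaces, ν a probability measure on X, and for each (x, a) ∈ X × Fin K a probability kernel giving the law of Y. Let μ be the law of (x, a, y) where x ∼ ν, a is uniform on Fin K, and y is drawn from the kernel at (x, a). Let H be a finite nonempty set of measurable functions from X × Y into the probability simplex Δ_K ⊆ ℝ^K containing h* with conditional expectation of e_A given (X, Y) under μ equal to h*(X, Y) almost surely. Let ĥ be any minimizer over H of the empirical loss Σ_{i=1}^N ‖h(x_i, y_i) − e_{a_i}‖₂² on N i.i.d. samples from μ. Then for every δ ∈ (0,1), with probability at least 1 − δ: Σ_{a=1}^K E_{x∼ν} E_{y | x, a}[ ( ĥ_a(x, y) − h*_a(x, y) )² ] ≤ C·K·log(|H|/δ)/N, where the inner expectation is over y drawn from the kernel at (x, a) with ĥ fixed. -/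

import Mathlib

open scoped BigOperators ProbabilityTheory ENNReal
open MeasureTheory ProbabilityTheory Real

/-! The excess squared loss `Z_h = ‖h - e_a‖² - ‖h* - e_a‖²` of a simplex-valued `h` is bounded
by `2`. Because `h*` is the conditional mean of the one-hot action vector `e_a` given `(x, y)`, the
cross term in `Z_h = ‖h - h*‖² + 2⟨h - h*, h* - e_a⟩` has mean zero, so `𝔼 Z_h = 𝔼‖h - h*‖²`, while
Cauchy–Schwarz gives `Z_h² ≤ 8 ‖h - h*‖²`. This variance condition yields the Bernstein-type bound
`P(∑ᵢ Z_h(zᵢ) ≤ 0) ≤ exp (-N 𝔼 Z_h / 32)`. The ERM has nonpositive empirical excess loss, so a union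
bound over `H` gives `𝔼‖ĥ - h*‖² ≤ 32 log (|H|/δ) / N` with probability `1 - δ`. Finally, as the
action is uniform on `K` values, the sum over actions of the per-action errors is `K` times the
error at the sampled action, which is at most `K 𝔼‖ĥ - h*‖²`. -/

section Concentration

variable {Ω : Type*} [MeasurableSpace Ω] {μ : Measure Ω} [IsProbabilityMeasure μ] {Z : Ω → ℝ}

lemma mgf_le_exp_of_abs_le {b t : ℝ} (hZ : Measurable Z) (hZb : ∀ ω, |Z ω| ≤ b)
    (ht : |t| * b ≤ 1) :
    mgf Z μ t ≤ exp (t * μ[Z] + t ^ 2 * μ[fun ω => Z ω ^ 2]) := by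
  have htZ : ∀ ω, |t * Z ω| ≤ 1 := fun ω => by
    rw [abs_mul]; exact (mul_le_mul_of_nonneg_left (hZb ω) (abs_nonneg t)).trans ht
  have hZi : Integrable Z μ := .of_bound hZ.aestronglyMeasurable b (ae_of_all _ hZb)
  have hZ2i : Integrable (fun ω => Z ω ^ 2) μ :=
    .of_bound (hZ.pow_const 2).aestronglyMeasurable (b ^ 2) (ae_of_all _ fun ω => by
      simpa [norm_pow, sq_abs] using pow_le_pow_left₀ (abs_nonneg _) (hZb ω) 2)
  have hexp_i : Integrable (fun ω => exp (t * Z ω)) μ :=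
    .of_bound (hZ.const_mul t).exp.aestronglyMeasurable (exp 1) (ae_of_all _ fun ω => by
      rw [norm_eq_abs, abs_exp]; exact exp_le_exp.2 ((le_abs_self _).trans (htZ ω)))
  have hpt : ∀ ω, exp (t * Z ω) ≤ 1 + t * Z ω + t ^ 2 * Z ω ^ 2 := fun ω => by
    have := (abs_le.1 (abs_exp_sub_one_sub_id_le (htZ ω))).2
    linarith [mul_pow t (Z ω) 2]
  have h1 : Integrable (fun ω => 1 + t * Z ω) μ := (integrable_const 1).add (hZi.const_mul t)
  have h2 : Integrable (fun ω => 1 + t * Z ω + t ^ 2 * Z ω ^ 2) μ := h1.add (hZ2i.const_mul _)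
  calc mgf Z μ t ≤ μ[fun ω => 1 + t * Z ω + t ^ 2 * Z ω ^ 2] := by
        rw [mgf]; exact integral_mono hexp_i h2 hpt
    _ = t * μ[Z] + t ^ 2 * μ[fun ω => Z ω ^ 2] + 1 := by
        rw [integral_add h1 (hZ2i.const_mul _), integral_add (integrable_const 1) (hZi.const_mul t),
          integral_const_mul, integral_const_mul]
        simp only [integral_const, probReal_univ, smul_eq_mul, mul_one]
        ring
    _ ≤ _ := add_one_le_exp _

lemma measureReal_pi_sum_nonpos_le_mgf_pow (N : ℕ) {t : ℝ} (ht : t ≤ 0)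
    (hint : Integrable (fun ω => exp (t * Z ω)) μ) :
    (Measure.pi fun _ : Fin N => μ).real {ω | ∑ i, Z (ω i) ≤ 0} ≤ mgf Z μ t ^ N := by
  have hprod : ∀ ω : Fin N → Ω, exp (t * ∑ i, Z (ω i)) = ∏ i, exp (t * Z (ω i)) := fun ω => by
    rw [Finset.mul_sum, exp_sum]
  have hint_sum : Integrable (fun ω : Fin N → Ω => exp (t * ∑ i, Z (ω i)))
      (Measure.pi fun _ => μ) := by
    simp_rw [hprod]; exact Integrable.fintype_prod fun _ => hint
  calc _ ≤ exp (-t * 0) * mgf (fun ω : Fin N → Ω => ∑ i, Z (ω i)) (Measure.pi fun _ => μ) t :=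
        measure_le_le_exp_mul_mgf 0 ht hint_sum
    _ = mgf Z μ t ^ N := by
        simp only [mul_zero, exp_zero, one_mul, mgf, hprod]
        simpa using integral_fintype_prod_eq_pow (ι := Fin N) (μ := μ) fun ω => exp (t * Z ω)

lemma measureReal_pi_sum_nonpos_le_exp (N : ℕ) {v : ℝ} (hv : 0 < v) (hZ : Measurable Z)
    (hZb : ∀ ω, |Z ω| ≤ 2 * v) (hvar : μ[fun ω => Z ω ^ 2] ≤ v * μ[Z]) :
    (Measure.pi fun _ : Fin N => μ).real {ω | ∑ i, Z (ω i) ≤ 0} ≤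
      exp (-(N * μ[Z]) / (4 * v)) := by
  set t := -1 / (2 * v) with htdef
  have ht0 : t < 0 := div_neg_of_neg_of_pos (by norm_num) (by positivity)
  have ht : |t| * (2 * v) = 1 := by
    rw [abs_of_neg ht0, htdef]
    field_simp
  have hint : Integrable (fun ω => exp (t * Z ω)) μ :=
    .of_bound (hZ.const_mul t).exp.aestronglyMeasurable (exp 1) (ae_of_all _ fun ω => by
      rw [norm_eq_abs, abs_exp]
      refine exp_le_exp.2 ((le_abs_self _).trans ?_)
      rw [abs_mul, ← ht]; exact mul_le_mul_of_nonneg_left (hZb ω) (abs_nonneg t))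
  have hmgf : mgf Z μ t ≤ exp (-μ[Z] / (4 * v)) := by
    refine (mgf_le_exp_of_abs_le hZ hZb ht.le).trans (exp_le_exp.2 ?_)
    have : t ^ 2 * μ[fun ω => Z ω ^ 2] ≤ t ^ 2 * (v * μ[Z]) :=
      mul_le_mul_of_nonneg_left hvar (sq_nonneg t)
    have : t * μ[Z] + t ^ 2 * (v * μ[Z]) = -μ[Z] / (4 * v) := by
      rw [htdef]; field_simp; ring
    linarith
  calc _ ≤ mgf Z μ t ^ N := measureReal_pi_sum_nonpos_le_mgf_pow N ht0.le hint
    _ ≤ exp (-μ[Z] / (4 * v)) ^ N := pow_le_pow_left₀ mgf_nonneg hmgf N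
    _ = _ := by rw [← exp_nat_mul]; ring_nf


lemma ofReal_one_sub_le_measure_pi_forall_integral_le {ι : Type*} {N : ℕ} (hN : 0 < N)
    {H : Set ι} (hH : H.Finite) (hHne : H.Nonempty) {Z : ι → Ω → ℝ}
    (hZ : ∀ h ∈ H, Measurable (Z h)) {c δ : ℝ} (hc : 0 < c) (hδ : 0 < δ)
    (htail : ∀ h ∈ H, (Measure.pi fun _ : Fin N => μ).real {ω | ∑ i, Z h (ω i) ≤ 0} ≤
      exp (-(N * μ[Z h]) / c)) :
    ENNReal.ofReal (1 - δ) ≤ Measure.pi (fun _ : Fin N => μ)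
      {ω | ∀ h ∈ H, ∑ i, Z h (ω i) ≤ 0 → μ[Z h] ≤ c * log (H.ncard / δ) / N} := by
  set P := Measure.pi fun _ : Fin N => μ
  set τ := c * log (H.ncard / δ) / N with hτ
  set S : ι → Set (Fin N → Ω) := fun h => {ω | ∑ i, Z h (ω i) ≤ 0}
  set bad := hH.toFinset.filter fun h => τ < μ[Z h]
  have hbad_sub : ∀ h ∈ bad, h ∈ H := fun h hh => hH.mem_toFinset.1 (Finset.mem_filter.1 hh).1
  have hHpos : (0 : ℝ) < H.ncard := by exact_mod_cast (Set.ncard_pos hH).2 hHne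
  have hS : ∀ h ∈ bad, P.real (S h) ≤ δ / H.ncard := fun h hh =>
    calc P.real (S h) ≤ exp (-(N * μ[Z h]) / c) := htail h (hbad_sub h hh)
      _ ≤ exp (-(N * τ) / c) := by
          gcongr
          exact (Finset.mem_filter.1 hh).2.le
      _ = δ / H.ncard := by
          rw [hτ, mul_div_cancel₀ _ (by positivity : (N : ℝ) ≠ 0), neg_div,
            mul_div_cancel_left₀ _ hc.ne', exp_neg, exp_log (by positivity), inv_div]
  have hbad : P.real (⋃ h ∈ bad, S h) ≤ δ :=
    calc P.real (⋃ h ∈ bad, S h) ≤ ∑ h ∈ bad, P.real (S h) := measureReal_biUnion_finset_le _ _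
      _ ≤ bad.card * (δ / H.ncard) := by
          simpa using Finset.sum_le_sum hS
      _ ≤ H.ncard * (δ / H.ncard) := by
          gcongr
          rw [Set.ncard_eq_toFinset_card H hH]
          exact_mod_cast Finset.card_filter_le _ _
      _ = δ := mul_div_cancel₀ _ hHpos.ne'
  have hbad_meas : MeasurableSet (⋃ h ∈ bad, S h) :=
    Finset.measurableSet_biUnion _ fun h hh =>
      (Finset.measurable_sum _ fun i _ => (hZ h (hbad_sub h hh)).comp (measurable_pi_apply i))
        measurableSet_Iic
  have hgood : (⋃ h ∈ bad, S h)ᶜ ⊆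
      {ω | ∀ h ∈ H, ∑ i, Z h (ω i) ≤ 0 → μ[Z h] ≤ τ} := fun ω hω h hh hemp => by
    by_contra hlt
    exact hω (Set.mem_biUnion (Finset.mem_filter.2 ⟨hH.mem_toFinset.2 hh, not_le.1 hlt⟩) hemp)
  rw [ENNReal.ofReal_le_iff_le_toReal (measure_ne_top _ _)]
  calc 1 - δ ≤ 1 - P.real (⋃ h ∈ bad, S h) := by linarith
    _ = P.real (⋃ h ∈ bad, S h)ᶜ := (probReal_compl_eq_one_sub hbad_meas).symm
    _ ≤ _ := measureReal_mono hgood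

end Concentration

section SqDist

variable {ι : Type*} [Fintype ι]

def sqDist (p q : ι → ℝ) : ℝ := ∑ k, (p k - q k) ^ 2

lemma sqDist_nonneg (p q : ι → ℝ) : 0 ≤ sqDist p q :=
  Finset.sum_nonneg fun _ _ => sq_nonneg _

lemma sq_sub_apply_le_sqDist (p q : ι → ℝ) (k : ι) : (p k - q k) ^ 2 ≤ sqDist p q :=
  Finset.single_le_sum (f := fun k => (p k - q k) ^ 2) (fun _ _ => sq_nonneg _)
    (Finset.mem_univ k)

lemma sqDist_sub_sqDist (p q e : ι → ℝ) :
    sqDist p e - sqDist q e = sqDist p q + 2 * ∑ k, (p k - q k) * (q k - e k) := by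
  simp only [sqDist, Finset.mul_sum, ← Finset.sum_sub_distrib, ← Finset.sum_add_distrib]
  exact Finset.sum_congr rfl fun _ _ => by ring

@[fun_prop]
lemma Measurable.sqDist {α : Type*} [MeasurableSpace α] {f g : α → ι → ℝ} (hf : Measurable f)
    (hg : Measurable g) : Measurable fun a => sqDist (f a) (g a) := by
  unfold _root_.sqDist; fun_prop

variable {p q e : ι → ℝ}

lemma abs_apply_sub_apply_le_one (hp : p ∈ stdSimplex ℝ ι) (hq : q ∈ stdSimplex ℝ ι) (k : ι) :
    |p k - q k| ≤ 1 :=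
  abs_sub_le_of_nonneg_of_le (hp.1 k) (mem_Icc_of_mem_stdSimplex hp k).2 (hq.1 k)
    (mem_Icc_of_mem_stdSimplex hq k).2

lemma sqDist_le_two (hp : p ∈ stdSimplex ℝ ι) (he : e ∈ stdSimplex ℝ ι) : sqDist p e ≤ 2 := by
  have hpt : ∀ k, (p k - e k) ^ 2 ≤ p k + e k := fun k => by
    obtain ⟨hp0, hp1⟩ := mem_Icc_of_mem_stdSimplex hp k
    obtain ⟨he0, he1⟩ := mem_Icc_of_mem_stdSimplex he k
    nlinarith
  calc sqDist p e ≤ ∑ k, (p k + e k) := Finset.sum_le_sum fun k _ => hpt k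
    _ = 2 := by rw [Finset.sum_add_distrib, hp.2, he.2]; norm_num

lemma abs_sqDist_sub_sqDist_le_two (hp : p ∈ stdSimplex ℝ ι) (hq : q ∈ stdSimplex ℝ ι)
    (he : e ∈ stdSimplex ℝ ι) : |sqDist p e - sqDist q e| ≤ 2 := by
  have := sqDist_le_two hp he; have := sqDist_le_two hq he
  have := sqDist_nonneg p e; have := sqDist_nonneg q e
  exact abs_le.2 ⟨by linarith, by linarith⟩

lemma sq_sqDist_sub_sqDist_le (hp : p ∈ stdSimplex ℝ ι) (hq : q ∈ stdSimplex ℝ ι)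
    (he : e ∈ stdSimplex ℝ ι) : (sqDist p e - sqDist q e) ^ 2 ≤ 8 * sqDist p q := by
  have hdiff : sqDist p e - sqDist q e = ∑ k, (p k - q k) * (p k + q k - 2 * e k) := by
    simp only [sqDist, ← Finset.sum_sub_distrib]
    exact Finset.sum_congr rfl fun _ _ => by ring
  have hpt : ∀ k, (p k + q k - 2 * e k) ^ 2 ≤ 2 * (p k + q k) + 4 * e k := fun k => by
    obtain ⟨hp0, hp1⟩ := mem_Icc_of_mem_stdSimplex hp k
    obtain ⟨hq0, hq1⟩ := mem_Icc_of_mem_stdSimplex hq k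
    obtain ⟨he0, he1⟩ := mem_Icc_of_mem_stdSimplex he k
    nlinarith
  have hsum : ∑ k, (p k + q k - 2 * e k) ^ 2 ≤ 8 :=
    calc _ ≤ ∑ k, (2 * (p k + q k) + 4 * e k) := Finset.sum_le_sum fun k _ => hpt k
      _ = 8 := by
          rw [Finset.sum_add_distrib, ← Finset.mul_sum, ← Finset.mul_sum,
            Finset.sum_add_distrib, hp.2, hq.2, he.2]
          norm_num
  calc (sqDist p e - sqDist q e) ^ 2
      ≤ sqDist p q * ∑ k, (p k + q k - 2 * e k) ^ 2 := by
        rw [hdiff]; exact Finset.sum_mul_sq_le_sq_mul_sq _ _ _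
    _ ≤ sqDist p q * 8 := mul_le_mul_of_nonneg_left hsum (sqDist_nonneg p q)
    _ = 8 * sqDist p q := mul_comm _ _

end SqDist

lemma integral_mul_sub_eq_zero_of_condExp_ae_eq {Ω : Type*} {m m₀ : MeasurableSpace Ω}
    (hm : m ≤ m₀) {μ : Measure Ω} [IsFiniteMeasure μ] {f g g' : Ω → ℝ}
    (hf : StronglyMeasurable[m] f) {c : ℝ} (hfc : ∀ ω, |f ω| ≤ c) (hg : Integrable g μ)
    (hg' : μ[g|m] =ᵐ[μ] g') :
    ∫ ω, f ω * (g' ω - g ω) ∂μ = 0 := by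
  have hfc' : ∀ᵐ ω ∂μ, ‖f ω‖ ≤ c := ae_of_all _ hfc
  have hfm : AEStronglyMeasurable f μ := (hf.mono hm).aestronglyMeasurable
  have hfg : Integrable (fun ω => f ω * g ω) μ := hg.bdd_mul hfm hfc'
  have hfg' : Integrable (fun ω => f ω * g' ω) μ :=
    (integrable_condExp.congr hg').bdd_mul hfm hfc'
  have hpull : ∫ ω, f ω * g ω ∂μ = ∫ ω, f ω * g' ω ∂μ :=
    calc ∫ ω, f ω * g ω ∂μ = ∫ ω, (μ[f * g|m]) ω ∂μ := (integral_condExp hm).symm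
      _ = ∫ ω, f ω * g' ω ∂μ := integral_congr_ae <|
          (condExp_stronglyMeasurable_mul_of_bound hm hf hg c hfc').trans
            (hg'.mono fun ω hω => by simp only [Pi.mul_apply, hω])
  simp only [mul_sub]
  rw [integral_sub hfg' hfg, hpull, sub_self]

lemma integral_compProd_prod_fintype {X A Y : Type*} [MeasurableSpace X] [MeasurableSpace A]
    [MeasurableSpace Y] [Fintype A] [MeasurableSingletonClass A] {ν : Measure X} [SFinite ν]
    {η : Measure A} [IsFiniteMeasure η] {κ : Kernel (X × A) Y} [IsSFiniteKernel κ]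
    {F : (X × A) × Y → ℝ} (hF : Integrable F ((ν.prod η) ⊗ₘ κ)) :
    ∫ z, F z ∂((ν.prod η) ⊗ₘ κ) = ∑ a, η.real {a} * ∫ x, ∫ y, F ((x, a), y) ∂(κ (x, a)) ∂ν := by
  have hG : Integrable (fun p => ∫ y, F (p, y) ∂(κ p)) (ν.prod η) := by
    simpa using hF.integral_compProd
  rw [Measure.integral_compProd hF, integral_prod_symm _ hG,
    integral_fintype Integrable.of_finite]
  rfl

lemma isProbabilityMeasure_inv_natCast_smul_count {K : ℕ} (hK : 0 < K) :
    IsProbabilityMeasure (((K : ℝ≥0∞)⁻¹) • (Measure.count : Measure (Fin K))) :=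
  ⟨by simp [ENNReal.inv_mul_cancel, hK.ne']⟩

lemma sum_integral_eq_mul_integral_compProd_uniform {K : ℕ} (hK : 0 < K) {X Y : Type*}
    [MeasurableSpace X] [MeasurableSpace Y] {ν : Measure X} [SFinite ν]
    {κ : Kernel (X × Fin K) Y} [IsSFiniteKernel κ] {F : (X × Fin K) × Y → ℝ}
    (hF : Integrable F ((ν.prod (((K : ℝ≥0∞)⁻¹) • (Measure.count : Measure (Fin K)))) ⊗ₘ κ)) :
    ∑ a, ∫ x, ∫ y, F ((x, a), y) ∂(κ (x, a)) ∂ν =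
      K * ∫ z, F z ∂((ν.prod (((K : ℝ≥0∞)⁻¹) • (Measure.count : Measure (Fin K)))) ⊗ₘ κ) := by
  have := isProbabilityMeasure_inv_natCast_smul_count hK
  rw [integral_compProd_prod_fintype hF, Finset.mul_sum]
  refine Finset.sum_congr rfl fun a _ => ?_
  simp [measureReal_def, ← mul_assoc, mul_inv_cancel₀ (Nat.cast_ne_zero.2 hK.ne' : (K : ℝ) ≠ 0)]

namespace InverseKinematics

variable {K : ℕ} {X Y : Type*}

-- For a sample `z = ((x, a), y)`: `obs z = (x, y)` and `actionVec z = e_a`.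
def obs (z : (X × Fin K) × Y) : X × Y := (z.1.1, z.2)

def actionVec (z : (X × Fin K) × Y) : Fin K → ℝ := fun k => if z.1.2 = k then 1 else 0

def excessLoss (h g : X × Y → Fin K → ℝ) (z : (X × Fin K) × Y) : ℝ :=
  sqDist (h (obs z)) (actionVec z) - sqDist (g (obs z)) (actionVec z)

lemma actionVec_mem_stdSimplex (z : (X × Fin K) × Y) : actionVec z ∈ stdSimplex ℝ (Fin K) :=
  ite_eq_mem_stdSimplex ℝ z.1.2

variable {h g : X × Y → Fin K → ℝ}

lemma abs_excessLoss_le_two (hs : ∀ p, h p ∈ stdSimplex ℝ (Fin K))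
    (gs : ∀ p, g p ∈ stdSimplex ℝ (Fin K)) (z : (X × Fin K) × Y) : |excessLoss h g z| ≤ 2 :=
  abs_sqDist_sub_sqDist_le_two (hs _) (gs _) (actionVec_mem_stdSimplex z)

lemma sq_excessLoss_le (hs : ∀ p, h p ∈ stdSimplex ℝ (Fin K))
    (gs : ∀ p, g p ∈ stdSimplex ℝ (Fin K)) (z : (X × Fin K) × Y) :
    excessLoss h g z ^ 2 ≤ 8 * sqDist (h (obs z)) (g (obs z)) :=
  sq_sqDist_sub_sqDist_le (hs _) (gs _) (actionVec_mem_stdSimplex z)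

variable [MeasurableSpace X] [MeasurableSpace Y]

@[fun_prop]
lemma measurable_obs : Measurable (obs : (X × Fin K) × Y → X × Y) := by
  unfold obs; fun_prop

@[fun_prop]
lemma measurable_actionVec : Measurable (actionVec : (X × Fin K) × Y → Fin K → ℝ) :=
  measurable_pi_lambda _ fun k =>
    Measurable.ite ((measurable_snd.comp measurable_fst) (measurableSet_singleton k))
      measurable_const measurable_const

lemma measurable_excessLoss (hm : Measurable h) (gm : Measurable g) :
    Measurable (excessLoss h g) :=
  ((hm.comp measurable_obs).sqDist measurable_actionVec).sub
    ((gm.comp measurable_obs).sqDist measurable_actionVec)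

lemma integrable_sqDist_comp_obs (hs : ∀ p, h p ∈ stdSimplex ℝ (Fin K))
    (gs : ∀ p, g p ∈ stdSimplex ℝ (Fin K)) (μ : Measure ((X × Fin K) × Y)) [IsFiniteMeasure μ]
    (hm : Measurable h) (gm : Measurable g) :
    Integrable (fun z => sqDist (h (obs z)) (g (obs z))) μ :=
  .of_bound ((hm.comp measurable_obs).sqDist (gm.comp measurable_obs)).aestronglyMeasurable 2
    (ae_of_all _ fun z => by
      rw [norm_of_nonneg (sqDist_nonneg _ _)]; exact sqDist_le_two (hs _) (gs _))

lemma integral_excessLoss_eq (hs : ∀ p, h p ∈ stdSimplex ℝ (Fin K))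
    (gs : ∀ p, g p ∈ stdSimplex ℝ (Fin K)) (μ : Measure ((X × Fin K) × Y)) [IsFiniteMeasure μ]
    (hm : Measurable h) (gm : Measurable g)
    (hcond : ∀ k : Fin K, μ[fun z => actionVec z k | MeasurableSpace.comap obs inferInstance]
      =ᵐ[μ] fun z => g (obs z) k) :
    μ[excessLoss h g] = μ[fun z => sqDist (h (obs z)) (g (obs z))] := by
  have hcross : ∀ k, Integrable
      (fun z => (h (obs z) k - g (obs z) k) * (g (obs z) k - actionVec z k)) μ ∧
      ∫ z, (h (obs z) k - g (obs z) k) * (g (obs z) k - actionVec z k) ∂μ = 0 := fun k => by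
    have hf : StronglyMeasurable[MeasurableSpace.comap obs inferInstance]
        fun z : (X × Fin K) × Y => h (obs z) k - g (obs z) k :=
      (Measurable.comp (by fun_prop : Measurable fun p => h p k - g p k)
        (comap_measurable obs)).stronglyMeasurable
    refine ⟨.of_bound (by fun_prop) 1 (ae_of_all _ fun z => ?_),
      integral_mul_sub_eq_zero_of_condExp_ae_eq measurable_obs.comap_le hf
        (fun z => abs_apply_sub_apply_le_one (hs _) (gs _) k)
        (.of_bound (by fun_prop) 1 (ae_of_all _ fun z => ?_)) (hcond k)⟩
    · rw [norm_mul, norm_eq_abs, norm_eq_abs]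
      exact mul_le_one₀ (abs_apply_sub_apply_le_one (hs _) (gs _) k) (abs_nonneg _)
        (abs_apply_sub_apply_le_one (gs _) (actionVec_mem_stdSimplex z) k)
    · rw [norm_eq_abs, abs_of_nonneg ((actionVec_mem_stdSimplex z).1 k)]
      exact (mem_Icc_of_mem_stdSimplex (actionVec_mem_stdSimplex z) k).2
  have hD := integrable_sqDist_comp_obs hs gs μ hm gm
  simp only [excessLoss, sqDist_sub_sqDist]
  rw [integral_add hD ((integrable_finsetSum _ fun k _ => (hcross k).1).const_mul 2),
    integral_const_mul, integral_finsetSum _ fun k _ => (hcross k).1]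
  simp [fun k => (hcross k).2]

lemma measureReal_pi_sum_excessLoss_nonpos_le (hs : ∀ p, h p ∈ stdSimplex ℝ (Fin K))
    (gs : ∀ p, g p ∈ stdSimplex ℝ (Fin K)) (μ : Measure ((X × Fin K) × Y))
    [IsProbabilityMeasure μ] (N : ℕ) (hm : Measurable h) (gm : Measurable g)
    (hcond : ∀ k : Fin K, μ[fun z => actionVec z k | MeasurableSpace.comap obs inferInstance]
      =ᵐ[μ] fun z => g (obs z) k) :
    (Measure.pi fun _ : Fin N => μ).real {ω | ∑ i, excessLoss h g (ω i) ≤ 0} ≤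
      exp (-(N * μ[excessLoss h g]) / 32) := by
  refine (measureReal_pi_sum_nonpos_le_exp N (v := 8) (by norm_num) (measurable_excessLoss hm gm)
    (fun z => (abs_excessLoss_le_two hs gs z).trans (by norm_num)) ?_).trans_eq (by norm_num)
  have hD := integrable_sqDist_comp_obs hs gs μ hm gm
  have hZ2 : Integrable (fun z => excessLoss h g z ^ 2) μ :=
    .of_bound ((measurable_excessLoss hm gm).pow_const 2).aestronglyMeasurable 4
      (ae_of_all _ fun z => by
        rw [norm_pow, norm_eq_abs]
        nlinarith [abs_excessLoss_le_two hs gs z, abs_nonneg (excessLoss h g z)])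
  calc ∫ z, excessLoss h g z ^ 2 ∂μ ≤ ∫ z, 8 * sqDist (h (obs z)) (g (obs z)) ∂μ :=
        integral_mono hZ2 (hD.const_mul 8) (sq_excessLoss_le hs gs)
    _ = 8 * ∫ z, excessLoss h g z ∂μ := by
        rw [integral_const_mul, integral_excessLoss_eq hs gs μ hm gm hcond]

lemma sum_integral_sq_sub_le (hs : ∀ p, h p ∈ stdSimplex ℝ (Fin K))
    (gs : ∀ p, g p ∈ stdSimplex ℝ (Fin K)) (hK : 0 < K) (ν : Measure X) [IsFiniteMeasure ν]
    (κ : Kernel (X × Fin K) Y) [IsFiniteKernel κ] (hm : Measurable h) (gm : Measurable g) :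
    ∑ a, ∫ x, ∫ y, (h (x, y) a - g (x, y) a) ^ 2 ∂(κ (x, a)) ∂ν ≤
      K * ∫ z, sqDist (h (obs z)) (g (obs z))
        ∂((ν.prod (((K : ℝ≥0∞)⁻¹) • (Measure.count : Measure (Fin K)))) ⊗ₘ κ) := by
  have := isProbabilityMeasure_inv_natCast_smul_count hK
  have hFm : Measurable fun z : (X × Fin K) × Y => (h (obs z) z.1.2 - g (obs z) z.1.2) ^ 2 := by
    have : Measurable fun q : (X × Y) × Fin K => (h q.1 q.2 - g q.1 q.2) ^ 2 :=
      measurable_from_prod_countable_left fun a =>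
        (((measurable_pi_apply a).comp hm).sub ((measurable_pi_apply a).comp gm)).pow_const 2
    exact this.comp (measurable_obs.prodMk (measurable_snd.comp measurable_fst))
  have hle : ∀ z : (X × Fin K) × Y,
      (h (obs z) z.1.2 - g (obs z) z.1.2) ^ 2 ≤ sqDist (h (obs z)) (g (obs z)) :=
    fun z => sq_sub_apply_le_sqDist _ _ _
  have hF : Integrable (fun z : (X × Fin K) × Y => (h (obs z) z.1.2 - g (obs z) z.1.2) ^ 2)
      ((ν.prod (((K : ℝ≥0∞)⁻¹) • (Measure.count : Measure (Fin K)))) ⊗ₘ κ) :=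
    .of_bound hFm.aestronglyMeasurable 2 (ae_of_all _ fun z => by
      rw [norm_of_nonneg (sq_nonneg _)]; exact (hle z).trans (sqDist_le_two (hs _) (gs _)))
  exact (sum_integral_eq_mul_integral_compProd_uniform hK hF).trans_le <|
    mul_le_mul_of_nonneg_left (integral_mono hF (integrable_sqDist_comp_obs hs gs _ hm gm) hle)
      (Nat.cast_nonneg K)

end InverseKinematics

open InverseKinematics

/-- **Eq. (22) (eq:gen_on) in the proof of Theorem 2.** Data are collected with the uniform
policy: `μ` is the law of `((x, a), y)` with `x ∼ ν`, `a` uniform on `Fin K`, and `y` drawn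
from the kernel `κ` at `(x, a)`. The per-action generalization error of the ERM
inverse-kinematics estimator, summed over all `K` actions, is `O(K log(|H|/δ)/N)` with
probability `1 − δ`. -/
theorem stmt_16 : ∃ C : ℝ, 0 < C ∧
    ∀ (K : ℕ), 1 ≤ K →
    ∀ (X Y : Type) (_ : MeasurableSpace X) (_ : MeasurableSpace Y)
      (ν : Measure X), IsProbabilityMeasure ν →
    ∀ (κ : Kernel (X × Fin K) Y), IsMarkovKernel κ →
    ∀ (μ : Measure ((X × Fin K) × Y)),
      μ = (ν.prod (((K : ℝ≥0∞)⁻¹) • (Measure.count : Measure (Fin K)))) ⊗ₘ κ →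
    ∀ (H : Set (X × Y → Fin K → ℝ)), H.Finite → H.Nonempty →
      (∀ h ∈ H, Measurable h ∧ ∀ p, h p ∈ stdSimplex ℝ (Fin K)) →
    ∀ hstar ∈ H,
      (∀ k : Fin K,
        (μ[(fun z : (X × Fin K) × Y => if z.1.2 = k then (1 : ℝ) else 0) |
            MeasurableSpace.comap (fun z : (X × Fin K) × Y => (z.1.1, z.2)) inferInstance])
          =ᵐ[μ] fun z => hstar (z.1.1, z.2) k) →
    ∀ (N : ℕ), 1 ≤ N →
    ∀ (hhat : (Fin N → (X × Fin K) × Y) → X × Y → Fin K → ℝ),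
      (∀ ω, hhat ω ∈ H ∧ ∀ h ∈ H,
        (∑ i : Fin N, ∑ k : Fin K,
            (hhat ω ((ω i).1.1, (ω i).2) k - if (ω i).1.2 = k then (1 : ℝ) else 0) ^ 2) ≤
          ∑ i : Fin N, ∑ k : Fin K,
            (h ((ω i).1.1, (ω i).2) k - if (ω i).1.2 = k then (1 : ℝ) else 0) ^ 2) →
    ∀ δ : ℝ, 0 < δ → δ < 1 →
      ENNReal.ofReal (1 - δ) ≤
        Measure.pi (fun _ : Fin N => μ)
          {ω | (∑ a : Fin K, ∫ x, (∫ y, (hhat ω (x, y) a - hstar (x, y) a) ^ 2 ∂(κ (x, a))) ∂ν) ≤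
            C * K * Real.log (H.ncard / δ) / N} := by
  refine ⟨32, by norm_num, ?_⟩
  rintro K hK X Y _ _ ν _ κ _ μ rfl H hH hHne hHs hstar hstarH hcond N hN hhat hERM δ hδ -
  have := isProbabilityMeasure_inv_natCast_smul_count hK
  obtain ⟨hstar_m, hstar_s⟩ := hHs hstar hstarH
  refine (ofReal_one_sub_le_measure_pi_forall_integral_le hN hH hHne
    (fun h hh => measurable_excessLoss (hHs h hh).1 hstar_m) (by norm_num) hδ
    fun h hh => measureReal_pi_sum_excessLoss_nonpos_le (hHs h hh).2 hstar_s _ N (hHs h hh).1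
      hstar_m hcond).trans (measure_mono fun ω hω => ?_)
  obtain ⟨hhatH, hmin⟩ := hERM ω
  obtain ⟨hhat_m, hhat_s⟩ := hHs _ hhatH
  have hemp : ∑ i, excessLoss (hhat ω) hstar (ω i) ≤ 0 := by
    simp only [excessLoss, Finset.sum_sub_distrib]
    exact sub_nonpos.2 (hmin hstar hstarH)
  calc _ ≤ K * ∫ z, sqDist (hhat ω (obs z)) (hstar (obs z))
        ∂((ν.prod (((K : ℝ≥0∞)⁻¹) • (Measure.count : Measure (Fin K)))) ⊗ₘ κ) :=
        sum_integral_sq_sub_le hhat_s hstar_s hK ν κ hhat_m hstar_m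
    _ = K * ∫ z, excessLoss (hhat ω) hstar z
        ∂((ν.prod (((K : ℝ≥0∞)⁻¹) • (Measure.count : Measure (Fin K)))) ⊗ₘ κ) := by
        rw [integral_excessLoss_eq hhat_s hstar_s _ hhat_m hstar_m hcond]
    _ ≤ K * (32 * log (H.ncard / δ) / N) := by
        gcongr
        exact hω _ hhatH hemp
    _ = 32 * K * log (H.ncard / δ) / N := by ring
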